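/- Let κ ∈ ℕ, let μ be a doubling measure on ℝⁿ, and let Q be a cube with sides parallel to the coordinate axes. Let Z denote the zero set of a Q-normalized polynomial P of degree less than κ, and for 0 < δ < 1 let Z_δ := {y ∈ ℝⁿ : dist(y,Z) < δ ℓ(Q)} denote the δ-halo of Z at the scale of Q. Then there exist θ > 0 and a positive constant C_{n,κ}, depending only on n, κ and the doubling constant of μ, and not on P itself, such that |Q ∩ Z_δ|_μ ≤ C_{n,κ} δ^θ |Q|_μ for all 0 < δ < 1. In particular this power decay holds for Z = ∂Q, which is a finite union of zero sets of linear functions. -/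

import Mathlib

open MeasureTheory Set
open scoped ENNReal NNReal BigOperators

noncomputable section

/-- Points of `ℝⁿ`. -/
abbrev Pt (n : ℕ) := EuclideanSpace ℝ (Fin n)

/-- An axis-parallel cube in `ℝⁿ`, recorded by its center and side length. -/
structure Cube (n : ℕ) where
  center : Pt n
  side : ℝ

namespace Cube

variable {n : ℕ}

/-- The underlying (closed) set of an axis-parallel cube. -/
def toSet (Q : Cube n) : Set (Pt n) :=
  {x : Pt n | ∀ i : Fin n, |x i - Q.center i| ≤ Q.side / 2}

/-- The concentric dilate `tQ` of a cube `Q`. -/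
def dilate (Q : Cube n) (t : ℝ) : Cube n :=
  ⟨Q.center, t * Q.side⟩

end Cube

/-- `μ` is doubling with doubling constant `C`:  `|2Q|_μ ≤ C |Q|_μ` for all cubes. -/
def IsDoubling {n : ℕ} (μ : Measure (Pt n)) (C : ℝ) : Prop :=
  ∀ Q : Cube n, 0 < Q.side → μ (Q.dilate 2).toSet ≤ ENNReal.ofReal C * μ Q.toSet

/-- `μ` has doubling exponent `θ`, valid for dilation factors `t ≥ t₀`. -/
def HasDoubExpFrom {n : ℕ} (μ : Measure (Pt n)) (θ t₀ : ℝ) : Prop :=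
  ∀ Q : Cube n, 0 < Q.side → ∀ t : ℝ, t₀ ≤ t →
    μ (Q.dilate t).toSet ≤ ENNReal.ofReal (t ^ θ) * μ Q.toSet

/-- `μ` has reverse doubling exponent `θ`, valid for dilation factors `0 < t ≤ t₀`. -/
def HasRevDoubExpFrom {n : ℕ} (μ : Measure (Pt n)) (θ t₀ : ℝ) : Prop :=
  ∀ Q : Cube n, 0 < Q.side → ∀ t : ℝ, 0 < t → t ≤ t₀ →
    μ (Q.dilate t).toSet ≤ ENNReal.ofReal (t ^ θ) * μ Q.toSet

/-- `μ` has reverse doubling exponent `θ` for all sufficiently small dilation factors. -/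
def HasRevDoubExp {n : ℕ} (μ : Measure (Pt n)) (θ : ℝ) : Prop :=
  ∃ t₀ : ℝ, 0 < t₀ ∧ HasRevDoubExpFrom μ θ t₀

/-- The square of the continuous homogeneous weighted Sobolev norm `‖f‖__{W^s(μ)}`:
`∬ ((f(x)-f(y))/|x-y|^s)² dμ(x)dμ(y) / |B((x+y)/2,|x-y|/2)|_μ`. -/
def contSobolevNormSq {n : ℕ} (μ : Measure (Pt n)) (s : ℝ) (f : Pt n → ℝ) : ℝ≥0∞ :=
  ∫⁻ x, ∫⁻ y,
    ENNReal.ofReal ((f x - f y) ^ 2 / ‖x - y‖ ^ (2 * s)) /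
      μ (Metric.ball (midpoint ℝ x y) (‖x - y‖ / 2)) ∂μ ∂μ

/-- An abstract dyadic grid on `ℝⁿ`: a collection of cubes of dyadic side lengths,
organized by a parent map, with the usual nesting and covering properties. -/
structure DyadicGrid (n : ℕ) where
  mem : Cube n → Prop
  parent : Cube n → Cube n
  side_pos : ∀ Q, mem Q → 0 < Q.side
  side_pow : ∀ Q, mem Q → ∃ k : ℤ, Q.side = 2 ^ k
  parent_mem : ∀ Q, mem Q → mem (parent Q)
  parent_side : ∀ Q, mem Q → (parent Q).side = 2 * Q.side
  subset_parent : ∀ Q, mem Q → Q.toSet ⊆ (parent Q).toSet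
  nested : ∀ Q Q', mem Q → mem Q' → Q.side ≤ Q'.side →
    Q.toSet ⊆ Q'.toSet ∨ Disjoint (interior Q.toSet) (interior Q'.toSet)
  covers : ∀ (k : ℤ) (x : Pt n), ∃ Q, mem Q ∧ Q.side = 2 ^ k ∧ x ∈ Q.toSet

namespace DyadicGrid

variable {n : ℕ}

/-- The dyadic children of a cube in a grid. -/
def children (D : DyadicGrid n) (Q : Cube n) : Set (Cube n) :=
  {Q' | D.mem Q' ∧ D.parent Q' = Q}

/-- The `m`-fold dyadic ancestor `π^{(m)} Q`. -/
def ancestor (D : DyadicGrid n) (m : ℕ) (Q : Cube n) : Cube n :=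
  D.parent^[m] Q

end DyadicGrid

/-- `p : ℝⁿ → ℝ` is a polynomial of degree `< κ`. -/
def IsPolyDegLt {n : ℕ} (κ : ℕ) (p : Pt n → ℝ) : Prop :=
  ∃ P : MvPolynomial (Fin n) ℝ, P.totalDegree < κ ∧
    ∀ x : Pt n, p x = MvPolynomial.eval (fun i => x i) P

/-- Membership in the weighted Alpert space `L²_{Q;κ}(μ)`: supported in `Q`, equal to a
polynomial of degree `< κ` on each dyadic child of `Q`, and with vanishing `μ`-moments
of order `< κ`. -/
def MemAlpertSpace {n : ℕ} (μ : Measure (Pt n)) (D : DyadicGrid n) (κ : ℕ) (Q : Cube n)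
    (f : Pt n → ℝ) : Prop :=
  Measurable f ∧ MemLp f 2 μ ∧
    (∀ᵐ x ∂μ, x ∉ Q.toSet → f x = 0) ∧
    (∀ Q' ∈ D.children Q, ∃ p, IsPolyDegLt κ p ∧ ∀ᵐ x ∂μ, x ∈ Q'.toSet → f x = p x) ∧
    (∀ β : Fin n → ℕ, (∑ i, β i) < κ → ∫ x, f x * (∏ i, x i ^ β i) ∂μ = 0)

/-- `g` is the orthogonal projection in `L²(μ)` of `f` onto the Alpert space
`L²_{Q;κ}(μ)`, i.e. `g = △_{Q;κ}^μ f`. -/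
def IsAlpertProj {n : ℕ} (μ : Measure (Pt n)) (D : DyadicGrid n) (κ : ℕ) (Q : Cube n)
    (f g : Pt n → ℝ) : Prop :=
  MemAlpertSpace μ D κ Q g ∧
    ∀ h, MemAlpertSpace μ D κ Q h → ∫ x, (f x - g x) * h x ∂μ = 0

/-- A coherent choice of the weighted Alpert projections `△_{Q;κ}^μ` for all cubes
of the grid `D`. -/
structure AlpertSystem {n : ℕ} (μ : Measure (Pt n)) (D : DyadicGrid n) (κ : ℕ) where
  proj : Cube n → (Pt n → ℝ) → Pt n → ℝ
  proj_measurable : ∀ Q f, Measurable (proj Q f)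
  isProj : ∀ Q, D.mem Q → ∀ f : Pt n → ℝ, Measurable f → MemLp f 2 μ →
    IsAlpertProj μ D κ Q f (proj Q f)

/-- The squared dyadic weighted Sobolev norm
`‖f‖²_{W^s_{D;κ}(μ)} = Σ_{Q∈D} ℓ(Q)^{-2s} ‖△_{Q;κ}^μ f‖²_{L²(μ)}`. -/
def sobNormSq {n : ℕ} {μ : Measure (Pt n)} {D : DyadicGrid n} {κ : ℕ}
    (A : AlpertSystem μ D κ) (s : ℝ) (f : Pt n → ℝ) : ℝ≥0∞ :=
  ∑' Q : {Q : Cube n // D.mem Q},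
    ENNReal.ofReal (Q.1.side ^ (-(2 * s))) *
      ∫⁻ x, ENNReal.ofReal (A.proj Q.1 f x ^ 2) ∂μ

/-- Membership in `Span{1_Q x^β : |β| < κ} ⊂ L²(μ)`. -/
def MemPolySpace {n : ℕ} (μ : Measure (Pt n)) (κ : ℕ) (Q : Cube n) (f : Pt n → ℝ) : Prop :=
  Measurable f ∧ MemLp f 2 μ ∧ (∀ᵐ x ∂μ, x ∉ Q.toSet → f x = 0) ∧
    ∃ p, IsPolyDegLt κ p ∧ ∀ᵐ x ∂μ, x ∈ Q.toSet → f x = p x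

/-- `g` is the orthogonal projection in `L²(μ)` of `f` onto `Span{1_Q x^β : |β| < κ}`,
i.e. `g = 𝔼_{Q;κ}^μ f`. -/
def IsPolyProj {n : ℕ} (μ : Measure (Pt n)) (κ : ℕ) (Q : Cube n) (f g : Pt n → ℝ) : Prop :=
  MemPolySpace μ κ Q g ∧ ∀ h, MemPolySpace μ κ Q h → ∫ x, (f x - g x) * h x ∂μ = 0

/-- A coherent choice of the projections `𝔼_{Q;κ}^μ` for all cubes. -/
structure PolyProjSystem {n : ℕ} (μ : Measure (Pt n)) (κ : ℕ) where
  proj : Cube n → (Pt n → ℝ) → Pt n → ℝ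
  isProj : ∀ (Q : Cube n) (f : Pt n → ℝ), Measurable f → MemLp f 2 μ →
    IsPolyProj μ κ Q f (proj Q f)

/-- The squared difference Sobolev norm
`‖f‖²_{W^s_{D_diff;κ}(μ)} = Σ_{Q∈D} ∫_Q |(f - 𝔼_{Q;κ}^μ f)/ℓ(Q)^s|² dμ`. -/
def diffNormSq {n : ℕ} {μ : Measure (Pt n)} {κ : ℕ} (D : DyadicGrid n)
    (E : PolyProjSystem μ κ) (s : ℝ) (f : Pt n → ℝ) : ℝ≥0∞ :=
  ∑' Q : {Q : Cube n // D.mem Q},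
    ENNReal.ofReal (Q.1.side ^ (-(2 * s))) *
      ∫⁻ x in Q.1.toSet, ENNReal.ofReal ((f x - E.proj Q.1 f x) ^ 2) ∂μ

/-- The `μ`-average `E_Q^μ f` of `f` on a cube `Q`. -/
def cubeAvg {n : ℕ} (μ : Measure (Pt n)) (Q : Cube n) (f : Pt n → ℝ) : ℝ :=
  (∫ x in Q.toSet, f x ∂μ) / (μ Q.toSet).toReal

/-- The squared difference Sobolev norm of order one (`κ = 1`),
`‖f‖²_{W^s_{D_diff;1}(μ)} = Σ_{Q∈D} ∫_Q |(f - E_Q^μ f)/ℓ(Q)^s|² dμ`. -/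
def diffNormSqOne {n : ℕ} (μ : Measure (Pt n)) (D : DyadicGrid n) (s : ℝ)
    (f : Pt n → ℝ) : ℝ≥0∞ :=
  ∑' Q : {Q : Cube n // D.mem Q},
    ENNReal.ofReal (Q.1.side ^ (-(2 * s))) *
      ∫⁻ x in Q.1.toSet, ENNReal.ofReal ((f x - cubeAvg μ Q.1 f) ^ 2) ∂μ

/-- The `m`-th order `α`-fractional Poisson integral `P_m^α(Q,μ)`. -/
def poisson {n : ℕ} (m α : ℝ) (Q : Cube n) (μ : Measure (Pt n)) : ℝ≥0∞ :=
  ∫⁻ y, ENNReal.ofReal (Q.side ^ m / (Q.side + ‖y - Q.center‖) ^ ((n : ℝ) + m - α)) ∂μ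

/-- The fractional Muckenhoupt constant
`A₂^α(σ,ω) = sup_Q |Q|_ω |Q|_σ / |Q|^{2(1-α/n)}`. -/
def A2Const (n : ℕ) (α : ℝ) (σ ω : Measure (Pt n)) : ℝ≥0∞ :=
  ⨆ (Q : Cube n) (_ : 0 < Q.side),
    ω Q.toSet * σ Q.toSet / ENNReal.ofReal (Q.side ^ (2 * ((n : ℝ) - α)))

/-- A smooth `α`-fractional Calderón–Zygmund kernel with size/smoothness constants `C j`:
`|∇_x^j K(x,y)| + |∇_y^j K(x,y)| ≤ C_j |x-y|^{α-j-n}` for all `j ≥ 0`. -/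
def IsCZKernel (n : ℕ) (α : ℝ) (C : ℕ → ℝ) (K : Pt n → Pt n → ℝ) : Prop :=
  Measurable (Function.uncurry K) ∧
    ∀ (j : ℕ) (x y : Pt n), x ≠ y →
      ‖iteratedFDeriv ℝ j (fun z => K z y) x‖ + ‖iteratedFDeriv ℝ j (fun z => K x z) y‖ ≤
        C j * ‖x - y‖ ^ (α - (j : ℝ) - (n : ℝ))

/-- An admissibly truncated smooth `α`-fractional Calderón–Zygmund kernel: it satisfies
the Calderón–Zygmund estimates and vanishes near the diagonal and near infinity. -/
def IsTruncatedCZKernel (n : ℕ) (α : ℝ) (C : ℕ → ℝ) (K : Pt n → Pt n → ℝ) : Prop :=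
  IsCZKernel n α C K ∧
    ∃ δ R : ℝ, 0 < δ ∧ δ < R ∧ ∀ x y : Pt n, (‖x - y‖ ≤ δ ∨ R ≤ ‖x - y‖) → K x y = 0

/-- `T_σ f(x) = ∫ K(x,y) f(y) dσ(y)`. -/
def CZOp {n : ℕ} (K : Pt n → Pt n → ℝ) (σ : Measure (Pt n)) (f : Pt n → ℝ)
    (x : Pt n) : ℝ :=
  ∫ y, K x y * f y ∂σ

/-- The dual Sobolev norm `‖g‖_{W^{-s}(μ)}`, realized as the norm of the linear functional
`f ↦ ⟨f,g⟩_{L²(μ)}` on the unit ball of `W^s(μ)`. -/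
def dualSobNorm {n : ℕ} (μ : Measure (Pt n)) (s : ℝ) (g : Pt n → ℝ) : ℝ≥0∞ :=
  ⨆ f : {f : Pt n → ℝ // Measurable f ∧ MemLp f 2 μ ∧ contSobolevNormSq μ s f ≤ 1},
    ENNReal.ofReal |∫ x, f.1 x * g x ∂μ|

/-- The cube `J` is `(r,ε)`-bad in the grid `D`. -/
def IsBad {n : ℕ} (D : DyadicGrid n) (r : ℕ) (ε : ℝ) (J : Cube n) : Prop :=
  ∃ I : Cube n, D.mem I ∧ (2 : ℝ) ^ r * J.side ≤ I.side ∧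
    ∃ p q : Pt n, (∃ I' ∈ D.children I, p ∈ frontier I'.toSet) ∧ q ∈ J.toSet ∧
      dist p q ≤ (1 / 2) * J.side ^ ε * I.side ^ (1 - ε)

/-- `f` is `(r,ε)`-good: its Alpert expansion is supported on `(r,ε)`-good cubes. -/
def IsGoodFun {n : ℕ} {μ : Measure (Pt n)} {D : DyadicGrid n} {κ : ℕ}
    (A : AlpertSystem μ D κ) (r : ℕ) (ε : ℝ) (f : Pt n → ℝ) : Prop :=
  ∀ Q, D.mem Q → IsBad D r ε Q → ∀ᵐ x ∂μ, A.proj Q f x = 0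

/-- The `ε`-strong `μ`-Carleson condition for a subgrid `𝓕` with constant `C`. -/
def StrongCarleson {n : ℕ} (μ : Measure (Pt n)) (𝓕 : Set (Cube n)) (ε C : ℝ) : Prop :=
  ∀ F' ∈ 𝓕,
    ∑' F : {F : Cube n // F ∈ 𝓕 ∧ F.toSet ⊆ F'.toSet},
        ENNReal.ofReal ((F'.side / F.1.side) ^ ε) * μ F.1.toSet ≤
      ENNReal.ofReal C * μ F'.toSet

/-- `V` is an upper bound for the square `(V_{2,ε}^{α,κ}(σ,ω))²` of the `ε`-strong
`κ`-pivotal constant: for every cube `Q` and every subdecomposition of `Q` into pairwise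
disjoint dyadic subcubes the corresponding pivotal sum is at most `V |Q|_σ`. -/
def IsPivotalBound {n : ℕ} (ε : ℝ) (κ : ℕ) (α : ℝ) (σ ω : Measure (Pt n))
    (V : ℝ≥0∞) : Prop :=
  ∀ Q : Cube n, 0 < Q.side → ∀ (Qr : ℕ → Cube n) (S : Set ℕ),
    (∀ r ∈ S, (Qr r).toSet ⊆ Q.toSet ∧ ∃ k : ℕ, (Qr r).side = Q.side / 2 ^ k) →
    (∀ r ∈ S, ∀ r' ∈ S, r ≠ r' →
      Disjoint (interior (Qr r).toSet) (interior (Qr r').toSet)) →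
    ∑' r : S, poisson (κ : ℝ) α (Qr r.1) (σ.restrict Q.toSet) ^ 2 *
        ENNReal.ofReal ((Q.side / (Qr r.1).side) ^ ε) * ω (Qr r.1).toSet ≤
      V * σ Q.toSet

/-- The Calderón–Zygmund corona `C_F` determined by the stopping cubes `𝓕`. -/
def corona {n : ℕ} (D : DyadicGrid n) (𝓕 : Set (Cube n)) (F : Cube n) : Set (Cube n) :=
  {I | D.mem I ∧ I.toSet ⊆ F.toSet ∧ ∀ F' ∈ 𝓕, F'.toSet ⊂ F.toSet → ¬ I.toSet ⊆ F'.toSet}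

/-- The `𝓕`-children of a stopping cube `F`: maximal members of `𝓕` strictly inside `F`. -/
def stoppingChildren {n : ℕ} (𝓕 : Set (Cube n)) (F : Cube n) : Set (Cube n) :=
  {F' | F' ∈ 𝓕 ∧ F'.toSet ⊂ F.toSet ∧
    ∀ F'' ∈ 𝓕, F''.toSet ⊂ F.toSet → F'.toSet ⊆ F''.toSet → F'' = F'}

/-- `N_D^τ(F)`: the cubes of `D` inside `F` within `τ` levels of the top. -/
def nbhd {n : ℕ} (D : DyadicGrid n) (τ : ℕ) (F : Cube n) : Set (Cube n) :=
  {J | D.mem J ∧ J.toSet ⊆ F.toSet ∧ F.side < 2 ^ τ * J.side}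

/-- The `τ`-shifted corona `C_F^{τ-shift}`. -/
def shiftedCorona {n : ℕ} (D : DyadicGrid n) (𝓕 : Set (Cube n)) (τ : ℕ) (F : Cube n) :
    Set (Cube n) :=
  (corona D 𝓕 F \ nbhd D τ F) ∪ ⋃ F' ∈ stoppingChildren 𝓕 F, (nbhd D τ F' \ nbhd D τ F)

/-- The shifted corona projection `P^ω_{C_F^{τ-shift}} g`. -/
def shiftProj {n : ℕ} {μ : Measure (Pt n)} {D : DyadicGrid n} {κ : ℕ}
    (A : AlpertSystem μ D κ) (𝓕 : Set (Cube n)) (τ : ℕ) (F : Cube n) (g : Pt n → ℝ)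
    (x : Pt n) : ℝ :=
  ∑' J : shiftedCorona D 𝓕 τ F, A.proj J.1 g x

/-- The squared `W^s_D(μ)` norm of the bad part `P_{bad;D}^μ f`. -/
def badNormSq {n : ℕ} {μ : Measure (Pt n)} {D : DyadicGrid n} {κ : ℕ}
    (A : AlpertSystem μ D κ) (r : ℕ) (ε s : ℝ) (f : Pt n → ℝ) : ℝ≥0∞ :=
  ∑' Q : {Q : Cube n // D.mem Q ∧ IsBad D r ε Q},
    ENNReal.ofReal (Q.1.side ^ (-(2 * s))) *
      ∫⁻ x, ENNReal.ofReal (A.proj Q.1 f x ^ 2) ∂μ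

/-- The bad projection `P_{bad;D}^μ f = Σ_{Q bad} △_Q^μ f`. -/
def badProj {n : ℕ} {μ : Measure (Pt n)} {D : DyadicGrid n} {κ : ℕ}
    (A : AlpertSystem μ D κ) (r : ℕ) (ε : ℝ) (f : Pt n → ℝ) (x : Pt n) : ℝ :=
  ∑' Q : {Q : Cube n // D.mem Q ∧ IsBad D r ε Q}, A.proj Q.1 f x

/-- The far-below form `T_farbelow(f,g)`. -/
def farBelowForm {n : ℕ} {σ ω : Measure (Pt n)} {D : DyadicGrid n} {κ₁ κ₂ : ℕ}
    (𝓕 : Set (Cube n)) (τ : ℕ) (K : Pt n → Pt n → ℝ)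
    (Aσ : AlpertSystem σ D κ₁) (Aω : AlpertSystem ω D κ₂) (f g : Pt n → ℝ) : ℝ :=
  ∑' F : 𝓕, ∑' I : {I : Cube n // D.mem I ∧ F.1.toSet ⊂ I.toSet},
    ∫ x, CZOp K σ (Aσ.proj I.1 f) x * shiftProj Aω 𝓕 τ F.1 g x ∂ω

/-- The homogeneous convolution kernel `K^α(x,y) = Ω(x-y)/|x-y|^{n-α}`. -/
def homogKernel (n : ℕ) (α : ℝ) (Om : Pt n → ℝ) : Pt n → Pt n → ℝ :=
  fun x y => Om (x - y) / ‖x - y‖ ^ ((n : ℝ) - α)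

/-- `K` is an admissible truncation of the kernel `Kfull`. -/
def IsAdmissibleTruncationOf (n : ℕ) (α : ℝ) (Kfull K : Pt n → Pt n → ℝ) : Prop :=
  (∃ CK : ℕ → ℝ, IsTruncatedCZKernel n α CK K) ∧
    ∃ η : ℝ → ℝ, (∀ t, 0 ≤ η t ∧ η t ≤ 1) ∧ ∀ x y : Pt n, K x y = η ‖x - y‖ * Kfull x y


/-!
Work with `f` normalized on `Q`. The polynomials of degree `≤ d` form a finite-dimensional space
of smooth functions, and only the zero polynomial vanishes on a cube; so on the unit cube the sup
norm of `f` controls its sup norm on any other cube and its Lipschitz constant there. An affine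
change of variables transports these bounds to every cube, at the scale `ℓ(Q)`.

Split `Q` into the `Nⁿ` cells of a uniform grid, with `N` so large that, by the Lipschitz bound,
`|f| ≥ 1/2` on the cell `S` containing a point where `|f| = 1`. By doubling, `S` carries a fixed
fraction `ε` of the mass of `Q`, and it misses the sublevel sets of small height. On every other
cell `B`, `f / sup_B |f|` is `B`-normalized and `sup_B |f| ≥ 1 / A`, so induction gives
`|Q ∩ {|f| ≤ K⁻ᵐ / 2}|_μ ≤ (1 - ε)ᵐ |Q|_μ`, a power bound for the sublevel sets. The `δ`-halo of
the zero set lies in the sublevel set `{|f| ≤ Λ δ}`, and `∂Q` is the zero set of the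
`Q`-normalized polynomial `∏ᵢ (1 - 4 ((xᵢ - cᵢ) / ℓ(Q))²)`.
-/

namespace MvPolynomial

theorem totalDegree_bind₁_le {σ τ R : Type*} [CommSemiring R] (φ : σ → MvPolynomial τ R)
    {m : ℕ} (hφ : ∀ i, (φ i).totalDegree ≤ m) (P : MvPolynomial σ R) :
    (bind₁ φ P).totalDegree ≤ P.totalDegree * m := by
  conv_lhs => rw [P.as_sum, map_sum]
  refine (totalDegree_finsetSum _ _).trans (Finset.sup_le fun s hs => ?_)
  rw [bind₁_monomial]
  calc (C (coeff s P) * ∏ i ∈ s.support, φ i ^ s i).totalDegree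
      ≤ ∑ i ∈ s.support, (φ i ^ s i).totalDegree := (totalDegree_mul _ _).trans
        (by rw [totalDegree_C, zero_add]; exact totalDegree_finsetProd _ _)
    _ ≤ ∑ i ∈ s.support, s i * m :=
        Finset.sum_le_sum fun i _ => (totalDegree_pow _ _).trans (Nat.mul_le_mul_left _ (hφ i))
    _ ≤ P.totalDegree * m := by
        rw [← Finset.sum_mul]; exact Nat.mul_le_mul_right _ (le_totalDegree hs)

end MvPolynomial

theorem Submodule.exists_abs_map_le_of_abs_le_on {X : Type*} [TopologicalSpace X]
    {V : Submodule ℝ (X → ℝ)} [FiniteDimensional ℝ V] (hcont : ∀ f ∈ V, Continuous f)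
    {K : Set X} (hK : IsCompact K) (huniq : ∀ f ∈ V, EqOn f 0 K → f = 0) :
    ∃ A : ℝ, 0 ≤ A ∧ ∀ (φ : (X → ℝ) →ₗ[ℝ] ℝ), ∀ f ∈ V, ∀ M : ℝ, 0 ≤ M →
      (∀ x ∈ K, |f x| ≤ M) → |φ f| ≤ A * M * ∑ i, |φ (Module.finBasis ℝ V i)| := by
  set b := Module.finBasis ℝ V
  have : CompactSpace K := isCompact_iff_compactSpace.mp hK
  let restrictK : V →ₗ[ℝ] C(K, ℝ) :=
    { toFun f := ⟨fun x => f.1 x, (hcont f f.2).comp continuous_subtype_val⟩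
      map_add' _ _ := rfl
      map_smul' _ _ := rfl }
  have hrestrict : Function.Injective restrictK := by
    rw [← LinearMap.ker_eq_bot, LinearMap.ker_eq_bot']
    exact fun f hf => Subtype.ext <|
      huniq f f.2 fun x hx => congrArg (fun g : C(K, ℝ) => g ⟨x, hx⟩) hf
  have hinj : Function.Injective (restrictK ∘ₗ b.equivFun.symm.toLinearMap) := by
    rw [LinearMap.coe_comp]
    exact hrestrict.comp b.equivFun.symm.injective
  obtain ⟨A, -, hA⟩ :=
    (restrictK ∘ₗ b.equivFun.symm.toLinearMap).injective_iff_antilipschitz.mp hinj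
  refine ⟨A, A.2, fun φ f hf M hM hfM => ?_⟩
  set c := b.equivFun ⟨f, hf⟩
  have hc : ‖c‖ ≤ A * M := by
    have hSc : ‖restrictK (b.equivFun.symm c)‖ ≤ M :=
      (ContinuousMap.norm_le _ hM).mpr fun x => by simpa [restrictK, c] using hfM x x.2
    have := hA.le_mul_dist c 0
    rw [map_zero, dist_zero_right, dist_zero_right] at this
    exact this.trans (by gcongr; exact hSc)
  calc |φ f| = |φ (∑ i, c i • b i : V)| := by rw [b.sum_equivFun]
    _ = |∑ i, c i * φ (b i)| := by simp [map_sum]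
    _ ≤ ∑ i, ‖c‖ * |φ (b i)| := (Finset.abs_sum_le_sum_abs _ _).trans
        (Finset.sum_le_sum fun i _ => by rw [abs_mul]; gcongr; exact norm_le_pi_norm c i)
    _ ≤ A * M * ∑ i, |φ (b i)| := by rw [← Finset.mul_sum]; gcongr

theorem exists_nat_lt_mem_Ico_mul {a h t : ℝ} {N : ℕ} (hh : 0 < h) (ha : a ≤ t)
    (hN : t < a + N * h) : ∃ j < N, a + j * h ≤ t ∧ t < a + (j + 1) * h := by
  have h0 : 0 ≤ (t - a) / h := div_nonneg (by linarith) hh.le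
  refine ⟨⌊(t - a) / h⌋₊, (Nat.floor_lt h0).mpr ((div_lt_iff₀ hh).mpr (by linarith)), ?_, ?_⟩
  · have := (le_div_iff₀ hh).mp (Nat.floor_le h0); linarith
  · have := (div_lt_iff₀ hh).mp (Nat.lt_floor_add_one ((t - a) / h)); linarith

theorem nat_eq_of_mem_Ico_mul {a h t : ℝ} {j j' : ℕ} (hh : 0 < h)
    (hj : a + j * h ≤ t ∧ t < a + (j + 1) * h) (hj' : a + j' * h ≤ t ∧ t < a + (j' + 1) * h) :
    j = j' := by
  have key : ∀ k l : ℕ, a + k * h ≤ t → t < a + (l + 1) * h → k ≤ l := fun k l h₁ h₂ => by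
    have : (k : ℝ) < l + 1 := lt_of_mul_lt_mul_right (by linarith) hh.le
    exact_mod_cast Nat.lt_succ_iff.mp (by exact_mod_cast this)
  exact le_antisymm (key _ _ hj.1 hj'.2) (key _ _ hj'.1 hj.2)

theorem MeasureTheory.measure_diff_le_ofReal_one_sub_mul {α : Type*} [MeasurableSpace α]
    {μ : Measure α} {s t : Set α} (hts : t ⊆ s) (ht : MeasurableSet t) (hs : μ s ≠ ⊤) {ε : ℝ}
    (hε : 0 ≤ ε) (h : ENNReal.ofReal ε * μ s ≤ μ t) :
    μ (s \ t) ≤ ENNReal.ofReal (1 - ε) * μ s := by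
  rw [measure_sdiff hts ht.nullMeasurableSet (ne_top_of_le_ne_top hs (measure_mono hts)),
    ENNReal.ofReal_sub _ hε, ENNReal.ofReal_one, ENNReal.sub_mul fun _ _ => hs, one_mul]
  exact tsub_le_tsub_left h _

-- The exponent is `θ = log_K (1 / q)`.
theorem exists_rpow_bound_of_geometric {c K q : ℝ} (hc : 0 < c) (hK : 1 < K) (hq₀ : 0 < q)
    (hq₁ : q < 1) : ∃ θ C : ℝ, 0 < θ ∧ 0 < C ∧ ∀ (φ : ℝ → ℝ≥0∞) (T : ℝ≥0∞), Monotone φ →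
      (∀ t, φ t ≤ T) → (∀ m : ℕ, φ (c / K ^ m) ≤ ENNReal.ofReal (q ^ m) * T) →
      ∀ t, 0 < t → φ t ≤ ENNReal.ofReal (C * t ^ θ) * T := by
  set θ := Real.logb K q⁻¹
  have hθ : 0 < θ := Real.logb_pos hK (one_lt_inv₀ hq₀ |>.mpr hq₁)
  have hKθ : K ^ θ = q⁻¹ := Real.rpow_logb (by linarith) hK.ne' (inv_pos.mpr hq₀)
  refine ⟨θ, (K / c) ^ θ, hθ, by positivity, fun φ T hφ hT hgeom t ht => ?_⟩
  have hCt : (K / c) ^ θ * t ^ θ = K ^ θ * (t / c) ^ θ := by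
    rw [← Real.mul_rpow (by positivity) ht.le, ← Real.mul_rpow (by positivity) (by positivity)]
    ring_nf
  rcases le_or_gt c t with hct | htc
  · refine (hT t).trans (le_mul_of_one_le_left zero_le (ENNReal.one_le_ofReal.mpr ?_))
    rw [hCt]
    exact one_le_mul_of_one_le_of_one_le (Real.one_le_rpow hK.le hθ.le)
      (Real.one_le_rpow ((one_le_div hc).mpr hct) hθ.le)
  · obtain ⟨m, hm₁, hm₂⟩ := exists_nat_pow_near ((one_le_div ht).mpr htc.le) hK
    have hqm : q ^ (m + 1) ≤ (t / c) ^ θ := by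
      rw [← inv_inv q, ← hKθ, inv_pow, Real.rpow_pow_comm (by linarith), ← inv_div,
        Real.inv_rpow (by positivity)]
      exact inv_anti₀ (by positivity) (Real.rpow_le_rpow (by positivity) hm₂.le hθ.le)
    calc φ t ≤ φ (c / K ^ m) :=
          hφ (by rwa [le_div_iff₀ (by positivity), mul_comm, ← le_div_iff₀ ht])
      _ ≤ ENNReal.ofReal (q ^ m) * T := hgeom m
      _ ≤ ENNReal.ofReal ((K / c) ^ θ * t ^ θ) * T := by
        gcongr
        rw [hCt, hKθ, ← div_le_iff₀' (inv_pos.mpr hq₀), div_inv_eq_mul, ← pow_succ]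
        exact hqm

namespace Cube

variable {n : ℕ}

-- Half-open, so that the cells of a grid partition the cube.
def box (Q : Cube n) : Set (Pt n) :=
  {x | ∀ i, Q.center i - Q.side / 2 ≤ x i ∧ x i < Q.center i + Q.side / 2}

theorem box_subset_toSet (Q : Cube n) : Q.box ⊆ Q.toSet := fun _ hx i =>
  abs_sub_le_iff.mpr ⟨by linarith [(hx i).2], by linarith [(hx i).1]⟩

theorem toSet_eq_preimage (Q : Cube n) : Q.toSet = (EuclideanSpace.equiv (Fin n) ℝ) ⁻¹'
    univ.pi fun i => Icc (Q.center i - Q.side / 2) (Q.center i + Q.side / 2) := by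
  ext x
  simp only [Cube.toSet, mem_ofPred_eq, mem_preimage, mem_univ_pi, mem_Icc, abs_sub_le_iff,
    PiLp.continuousLinearEquiv_apply]
  exact forall_congr' fun i => ⟨fun h => ⟨by linarith [h.2], by linarith [h.1]⟩,
    fun h => ⟨by linarith [h.2], by linarith [h.1]⟩⟩

theorem box_eq_preimage (Q : Cube n) : Q.box = (EuclideanSpace.equiv (Fin n) ℝ) ⁻¹'
    univ.pi fun i => Ico (Q.center i - Q.side / 2) (Q.center i + Q.side / 2) := by
  ext x
  simp only [box, mem_ofPred_eq, mem_preimage, mem_univ_pi, mem_Ico,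
    PiLp.continuousLinearEquiv_apply]

theorem isCompact_toSet (Q : Cube n) : IsCompact Q.toSet := by
  rw [toSet_eq_preimage]
  exact (EuclideanSpace.equiv (Fin n) ℝ).toHomeomorph.isCompact_preimage.mpr
    (isCompact_univ_pi fun _ => isCompact_Icc)

theorem measurableSet_box (Q : Cube n) : MeasurableSet Q.box := by
  rw [box_eq_preimage]
  exact (EuclideanSpace.equiv (Fin n) ℝ).continuous.measurable
    (MeasurableSet.univ_pi fun _ => measurableSet_Ico)

theorem center_mem_toSet {Q : Cube n} (hQ : 0 ≤ Q.side) : Q.center ∈ Q.toSet := fun i => by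
  rw [sub_self, abs_zero]; linarith

theorem dist_le_of_mem {Q : Cube n} (hQ : 0 ≤ Q.side) {x y : Pt n} (hx : x ∈ Q.toSet)
    (hy : y ∈ Q.toSet) : dist x y ≤ √n * Q.side := by
  have hcoord : ∀ i, dist (x i) (y i) ^ 2 ≤ Q.side ^ 2 := fun i => by
    rw [Real.dist_eq, sq_le_sq, abs_abs, abs_of_nonneg hQ]
    have := abs_sub_le (x i) (Q.center i) (y i)
    rw [abs_sub_comm (Q.center i)] at this
    linarith [hx i, hy i]
  rw [EuclideanSpace.dist_eq]
  calc √(∑ i, dist (x i) (y i) ^ 2) ≤ √(∑ _i : Fin n, Q.side ^ 2) :=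
        Real.sqrt_le_sqrt (Finset.sum_le_sum fun i _ => hcoord i)
    _ = √n * Q.side := by
        rw [Finset.sum_const, Finset.card_univ, Fintype.card_fin, nsmul_eq_mul,
          Real.sqrt_mul (Nat.cast_nonneg _), Real.sqrt_sq hQ]

theorem toSet_subset_dilate (Q : Cube n) (hQ : 0 ≤ Q.side) {t : ℝ} (ht : 1 ≤ t) :
    Q.toSet ⊆ (Q.dilate t).toSet := fun x hx i =>
  (hx i).trans (by simp only [dilate]; nlinarith)

theorem toSet_subset_dilate_of_center_mem {R S : Cube n} (hS : S.center ∈ R.toSet) {t : ℝ}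
    (ht : 2 * R.side ≤ t * S.side) : R.toSet ⊆ (S.dilate t).toSet := fun x hx i => by
  have := abs_sub_le (x i) (R.center i) (S.center i)
  rw [abs_sub_comm (R.center i)] at this
  simp only [dilate]
  linarith [hx i, hS i]

theorem dilate_subset_box {Q : Cube n} (hQ : 0 < Q.side) {t : ℝ} (ht : t < 1) :
    (Q.dilate t).toSet ⊆ Q.box := fun x hx i => by
  have h := abs_sub_le_iff.mp (hx i)
  simp only [dilate] at h
  constructor <;> nlinarith

theorem toSet_subset_box_dilate_two (Q : Cube n) (hQ : 0 < Q.side) :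
    Q.toSet ⊆ (Q.dilate 2).box := fun x hx i => by
  have h := abs_sub_le_iff.mp (hx i)
  simp only [dilate]
  constructor <;> linarith

theorem mem_dilate_three_of_dist_lt {Q : Cube n} {y z : Pt n} (hy : y ∈ Q.toSet)
    (hyz : dist y z < Q.side) : z ∈ (Q.dilate 3).toSet := fun i => by
  have h₁ := PiLp.dist_apply_le y z i
  have h₂ := abs_sub_le (z i) (y i) (Q.center i)
  rw [Real.dist_eq, abs_sub_comm] at h₁
  simp only [dilate]
  linarith [hy i]

theorem frontier_toSet_subset (Q : Cube n) :
    frontier Q.toSet ⊆ {z | ∃ i, |z i - Q.center i| = Q.side / 2} := by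
  intro z hz
  by_contra hnot
  have h : ∀ i, |z i - Q.center i| ≠ Q.side / 2 := fun i hi => hnot ⟨i, hi⟩
  have hU : IsOpen {x : Pt n | ∀ i, |x i - Q.center i| < Q.side / 2} := by
    simp only [ofPred_forall]
    exact isOpen_iInter_of_finite fun i => isOpen_lt (by fun_prop) continuous_const
  have hzQ := Q.isCompact_toSet.isClosed.frontier_subset hz
  exact hz.2 (interior_maximal (fun x hx i => (hx i).le) hU fun i => (hzQ i).lt_of_ne (h i))

-- The cell with index `j` of the grid of `Nⁿ` subcubes of side `ℓ(Q) / N`.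
def subcube (Q : Cube n) (N : ℕ) (j : Fin n → Fin N) : Cube n :=
  ⟨WithLp.toLp 2 fun i => Q.center i - Q.side / 2 + ((j i : ℝ) + 1 / 2) * (Q.side / N),
    Q.side / N⟩

theorem mem_box_subcube_iff {Q : Cube n} {N : ℕ} {j : Fin n → Fin N} {x : Pt n} :
    x ∈ (Q.subcube N j).box ↔ ∀ i, Q.center i - Q.side / 2 + (j i : ℕ) * (Q.side / N) ≤ x i ∧
      x i < Q.center i - Q.side / 2 + ((j i : ℕ) + 1) * (Q.side / N) := by
  simp only [box, subcube, mem_ofPred_eq]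
  exact forall_congr' fun i => and_congr (by constructor <;> intro h <;> linarith)
    (by constructor <;> intro h <;> linarith)

theorem mem_subcube_iff {Q : Cube n} {N : ℕ} {j : Fin n → Fin N} {x : Pt n} :
    x ∈ (Q.subcube N j).toSet ↔ ∀ i, Q.center i - Q.side / 2 + (j i : ℕ) * (Q.side / N) ≤ x i ∧
      x i ≤ Q.center i - Q.side / 2 + ((j i : ℕ) + 1) * (Q.side / N) := by
  simp only [Cube.toSet, subcube, mem_ofPred_eq, abs_sub_le_iff]
  exact forall_congr' fun i => by constructor <;> intro h <;> constructor <;> linarith [h.1, h.2]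

theorem subcube_subset {Q : Cube n} (hQ : 0 < Q.side) {N : ℕ} (j : Fin n → Fin N) :
    (Q.subcube N j).toSet ⊆ Q.toSet := fun x hx i => by
  have hjN : ((j i : ℕ) : ℝ) + 1 ≤ N := by exact_mod_cast (j i).isLt
  have hN : (0 : ℝ) < N := by linarith [(Nat.cast_nonneg (j i : ℕ) : (0 : ℝ) ≤ _)]
  have h1 : ((j i : ℕ) + 1) * (Q.side / N) ≤ Q.side := by
    calc _ ≤ (N : ℝ) * (Q.side / N) := by gcongr
      _ = Q.side := by field_simp
  have := mem_subcube_iff.mp hx i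
  rw [abs_sub_le_iff]
  constructor <;> nlinarith [(Nat.cast_nonneg (j i : ℕ) : (0 : ℝ) ≤ _), div_pos hQ hN]

theorem iUnion_box_subcube {Q : Cube n} (hQ : 0 < Q.side) {N : ℕ} (hN : 0 < N) :
    ⋃ j, (Q.subcube N j).box = Q.box := by
  have hh : 0 < Q.side / N := by positivity
  refine Subset.antisymm (iUnion_subset fun j x hx i => ?_) fun x hx => ?_
  · have := (box_subset_toSet _).trans (Q.subcube_subset hQ j) hx i
    have hj := mem_box_subcube_iff.mp hx i
    have hjN : ((j i : ℕ) : ℝ) + 1 ≤ N := by exact_mod_cast (j i).isLt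
    have h1 : ((j i : ℕ) + 1) * (Q.side / N) ≤ Q.side := by
      calc _ ≤ (N : ℝ) * (Q.side / N) := by gcongr
        _ = Q.side := by field_simp
    constructor <;> nlinarith [(Nat.cast_nonneg (j i : ℕ) : (0 : ℝ) ≤ _)]
  · have : ∀ i, ∃ k : Fin N, Q.center i - Q.side / 2 + (k : ℕ) * (Q.side / N) ≤ x i ∧
        x i < Q.center i - Q.side / 2 + ((k : ℕ) + 1) * (Q.side / N) := fun i => by
      obtain ⟨k, hk, hk'⟩ := exists_nat_lt_mem_Ico_mul hh (a := Q.center i - Q.side / 2)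
        (hx i).1 (by field_simp; linarith [(hx i).2])
      exact ⟨⟨k, hk⟩, hk'⟩
    choose j hj using this
    exact mem_iUnion.mpr ⟨j, mem_box_subcube_iff.mpr hj⟩

theorem pairwise_disjoint_box_subcube {Q : Cube n} (hQ : 0 < Q.side) (N : ℕ) :
    Pairwise fun j j' => Disjoint (Q.subcube N j).box (Q.subcube N j').box := by
  intro j j' hne
  refine Set.disjoint_left.mpr fun x hx hx' => hne (funext fun i => Fin.ext ?_)
  rw [mem_box_subcube_iff] at hx hx'
  exact nat_eq_of_mem_Ico_mul (div_pos hQ (Nat.cast_pos.mpr (j i).pos)) (hx i) (hx' i)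

theorem exists_mem_subcube {Q : Cube n} (hQ : 0 < Q.side) {N : ℕ} (hN : 0 < N) {x : Pt n}
    (hx : x ∈ Q.toSet) : ∃ j, x ∈ (Q.subcube N j).toSet := by
  have hh : 0 < Q.side / N := by positivity
  have hNh : (N : ℝ) * (Q.side / N) = Q.side := by field_simp
  have : ∀ i, ∃ k : Fin N, Q.center i - Q.side / 2 + (k : ℕ) * (Q.side / N) ≤ x i ∧
      x i ≤ Q.center i - Q.side / 2 + ((k : ℕ) + 1) * (Q.side / N) := fun i => by
    obtain ⟨h₁, h₂⟩ := abs_sub_le_iff.mp (hx i)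
    rcases (show x i ≤ Q.center i + Q.side / 2 by linarith).lt_or_eq with hlt | heq
    · obtain ⟨k, hk, hk'⟩ := exists_nat_lt_mem_Ico_mul hh (a := Q.center i - Q.side / 2)
        (t := x i) (N := N) (by linarith) (by linarith)
      exact ⟨⟨k, hk⟩, hk'.1, hk'.2.le⟩
    · refine ⟨⟨N - 1, Nat.sub_lt hN one_pos⟩, ?_, ?_⟩ <;>
        simp only [Nat.cast_pred hN, sub_add_cancel]
      · linarith [show ((N : ℝ) - 1) * (Q.side / N) = Q.side - Q.side / N by
          rw [sub_mul, hNh, one_mul]]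
      · linarith
  choose j hj using this
  exact ⟨j, mem_subcube_iff.mpr hj⟩

theorem measure_box_inter_le_sum (μ : Measure (Pt n)) {Q : Cube n} (hQ : 0 < Q.side) {N : ℕ}
    (hN : 0 < N) (E : Set (Pt n)) : μ (Q.box ∩ E) ≤ ∑ j, μ ((Q.subcube N j).box ∩ E) := by
  rw [← iUnion_box_subcube hQ hN, iUnion_inter]
  exact measure_iUnion_fintype_le _ _

theorem sum_measure_box_subcube_diff (μ : Measure (Pt n)) {Q : Cube n} (hQ : 0 < Q.side)
    {N : ℕ} (hN : 0 < N) {T : Set (Pt n)} (hT : MeasurableSet T) :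
    ∑ j, μ ((Q.subcube N j).box \ T) = μ (Q.box \ T) := by
  rw [← iUnion_box_subcube hQ hN, iUnion_sdiff, measure_iUnion, tsum_fintype]
  · exact fun j j' hne => (pairwise_disjoint_box_subcube hQ N hne).mono sdiff_subset sdiff_subset
  · exact fun j => (measurableSet_box _).diff hT

theorem measure_box_inter_le_of_subcube (μ : Measure (Pt n)) [IsLocallyFiniteMeasure μ]
    {Q : Cube n} (hQ : 0 < Q.side) {N : ℕ} (hN : 0 < N) {E : Set (Pt n)}
    {j₀ : Fin n → Fin N} {a : ℝ≥0∞} {ε : ℝ} (hε : 0 ≤ ε)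
    (hS : ENNReal.ofReal ε * μ Q.box ≤ μ (Q.subcube N j₀).box)
    (hE₀ : Disjoint (Q.subcube N j₀).box E)
    (hE : ∀ j ≠ j₀, μ ((Q.subcube N j).box ∩ E) ≤ a * μ (Q.subcube N j).box) :
    μ (Q.box ∩ E) ≤ a * (ENNReal.ofReal (1 - ε) * μ Q.box) := by
  set S := Q.subcube N j₀
  have hcell : ∀ j, μ ((Q.subcube N j).box ∩ E) ≤ a * μ ((Q.subcube N j).box \ S.box) := by
    intro j
    by_cases hj : j = j₀
    · rw [hj, hE₀.inter_eq, measure_empty]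
      exact zero_le
    · rw [(pairwise_disjoint_box_subcube hQ N hj).sdiff_eq_left]
      exact hE j hj
  have hSQ : S.box ⊆ Q.box :=
    iUnion_box_subcube hQ hN ▸ subset_iUnion (fun j => (Q.subcube N j).box) j₀
  have hQfin : μ Q.box ≠ ⊤ :=
    ((measure_mono Q.box_subset_toSet).trans_lt Q.isCompact_toSet.measure_lt_top).ne
  calc μ (Q.box ∩ E) ≤ ∑ j, μ ((Q.subcube N j).box ∩ E) := measure_box_inter_le_sum μ hQ hN E
    _ ≤ ∑ j, a * μ ((Q.subcube N j).box \ S.box) := Finset.sum_le_sum fun j _ => hcell j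
    _ = a * μ (Q.box \ S.box) := by
      rw [← Finset.mul_sum, sum_measure_box_subcube_diff μ hQ hN (measurableSet_box _)]
    _ ≤ a * (ENNReal.ofReal (1 - ε) * μ Q.box) := by
      gcongr
      exact measure_diff_le_ofReal_one_sub_mul hSQ (measurableSet_box _) hQfin hε hS

def unit (n : ℕ) : Cube n := ⟨0, 1⟩

def affine (Q : Cube n) (x : Pt n) : Pt n := Q.center + Q.side • x

def affineImage (Q Q₀ : Cube n) : Cube n := ⟨Q.affine Q₀.center, Q.side * Q₀.side⟩

theorem affine_mem_affineImage_iff {Q : Cube n} (hQ : 0 < Q.side) {Q₀ : Cube n} {x : Pt n} :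
    Q.affine x ∈ (Q.affineImage Q₀).toSet ↔ x ∈ Q₀.toSet := by
  refine forall_congr' fun i => ?_
  simp only [affineImage, affine, PiLp.add_apply, PiLp.smul_apply, smul_eq_mul,
    add_sub_add_left_eq_sub, ← mul_sub, abs_mul, abs_of_pos hQ, mul_div_assoc]
  exact mul_le_mul_iff_right₀ hQ

theorem forall_mem_affineImage_iff {Q : Cube n} (hQ : 0 < Q.side) {Q₀ : Cube n}
    {p : Pt n → Prop} :
    (∀ y ∈ (Q.affineImage Q₀).toSet, p y) ↔ ∀ x ∈ Q₀.toSet, p (Q.affine x) := by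
  refine ⟨fun h x hx => h _ (affine_mem_affineImage_iff hQ |>.mpr hx), fun h y hy => ?_⟩
  have hy' : Q.affine (Q.side⁻¹ • (y - Q.center)) = y := by
    simp [affine, smul_smul, mul_inv_cancel₀ hQ.ne']
  rw [← hy'] at hy ⊢
  exact h _ ((affine_mem_affineImage_iff hQ).mp hy)

theorem dist_affine {Q : Cube n} (hQ : 0 ≤ Q.side) (x y : Pt n) :
    dist (Q.affine x) (Q.affine y) = Q.side * dist x y := by
  rw [affine, affine, dist_add_left, dist_smul₀, Real.norm_of_nonneg hQ]

theorem affineImage_unit (Q : Cube n) : Q.affineImage (unit n) = Q := by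
  simp [affineImage, affine, unit]

theorem affineImage_unit_dilate (Q : Cube n) (t : ℝ) :
    Q.affineImage ((unit n).dilate t) = Q.dilate t := by
  simp [affineImage, affine, unit, Cube.dilate, mul_comm]

theorem affineImage_unit_subcube (Q : Cube n) (N : ℕ) (j : Fin n → Fin N) :
    Q.affineImage ((unit n).subcube N j) = Q.subcube N j := by
  simp only [affineImage, affine, unit, subcube, Cube.mk.injEq]
  refine ⟨?_, by ring⟩
  ext i
  simp only [PiLp.add_apply, PiLp.smul_apply, PiLp.zero_apply, smul_eq_mul]
  ring

end Cube

section Doubling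

variable {n : ℕ} {μ : Measure (Pt n)} {Cd : ℝ}

theorem IsDoubling.mono (h : IsDoubling μ Cd) {Cd' : ℝ} (hC : Cd ≤ Cd') : IsDoubling μ Cd' :=
  fun Q hQ => (h Q hQ).trans (by gcongr)

theorem IsDoubling.measure_dilate_pow_le (h : IsDoubling μ Cd) {Q : Cube n} (hQ : 0 < Q.side)
    (k : ℕ) : μ (Q.dilate (2 ^ k)).toSet ≤ ENNReal.ofReal Cd ^ k * μ Q.toSet := by
  induction k with
  | zero => simp [Cube.dilate]
  | succ k ih =>
    have hdil : Q.dilate (2 ^ (k + 1)) = (Q.dilate (2 ^ k)).dilate 2 := by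
      simp only [Cube.dilate, pow_succ, mul_assoc, mul_comm (2 : ℝ)]
    rw [hdil, pow_succ']
    calc _ ≤ ENNReal.ofReal Cd * μ (Q.dilate (2 ^ k)).toSet := h _ (by simp [Cube.dilate, hQ])
      _ ≤ _ := by rw [mul_assoc]; gcongr

theorem IsDoubling.measure_box_le_subcube (h : IsDoubling μ Cd) {Q : Cube n} (hQ : 0 < Q.side)
    {N k : ℕ} (hN : 0 < N) (hk : 4 * N ≤ 2 ^ k) (j : Fin n → Fin N) :
    μ Q.box ≤ ENNReal.ofReal Cd ^ k * μ (Q.subcube N j).box := by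
  set S := (Q.subcube N j).dilate (1 / 2)
  have hS : 0 < S.side := by simp only [S, Cube.dilate, Cube.subcube]; positivity
  have hcover : Q.toSet ⊆ (S.dilate (2 ^ k)).toSet := by
    refine Cube.toSet_subset_dilate_of_center_mem (S := S) (Q.subcube_subset hQ j
      ((Q.subcube N j).center_mem_toSet (by simp only [Cube.subcube]; positivity))) ?_
    have : (4 * N : ℝ) ≤ 2 ^ k := by exact_mod_cast hk
    simp only [S, Cube.dilate, Cube.subcube]
    rw [show (2 : ℝ) ^ k * (1 / 2 * (Q.side / N)) = 2 ^ k / (4 * N) * (2 * Q.side) by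
      field_simp; ring]
    exact le_mul_of_one_le_left (by linarith) ((one_le_div (by positivity)).mpr this)
  calc μ Q.box ≤ μ (S.dilate (2 ^ k)).toSet := measure_mono (Q.box_subset_toSet.trans hcover)
    _ ≤ ENNReal.ofReal Cd ^ k * μ S.toSet := h.measure_dilate_pow_le hS k
    _ ≤ _ := by
      gcongr
      exact Cube.dilate_subset_box (div_pos hQ (Nat.cast_pos.mpr hN)) (by norm_num)

end Doubling

def polyEval (n : ℕ) : MvPolynomial (Fin n) ℝ →ₗ[ℝ] (Pt n → ℝ) where
  toFun P x := MvPolynomial.eval (fun i => x i) P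
  map_add' _ _ := by ext; simp
  map_smul' _ _ := by ext; simp

def polyFun (n d : ℕ) : Submodule ℝ (Pt n → ℝ) :=
  (MvPolynomial.restrictTotalDegree (Fin n) ℝ d).map (polyEval n)

instance (n d : ℕ) : FiniteDimensional ℝ (polyFun n d) := by
  unfold polyFun; infer_instance

theorem contDiff_polyEval {n : ℕ} (P : MvPolynomial (Fin n) ℝ) : ContDiff ℝ ⊤ (polyEval n P) := by
  change ContDiff ℝ ⊤ fun x : Pt n => MvPolynomial.eval (fun i => x i) P
  induction P using MvPolynomial.induction_on with
  | C a => simpa only [MvPolynomial.eval_C] using contDiff_const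
  | add p q hp hq => simpa only [map_add] using hp.add hq
  | mul_X p i hp => simpa only [map_mul, MvPolynomial.eval_X] using hp.mul (by fun_prop)

def IsNormalizedOn {n : ℕ} (Q : Cube n) (f : Pt n → ℝ) : Prop :=
  (∀ x ∈ Q.toSet, |f x| ≤ 1) ∧ ∃ x ∈ Q.toSet, |f x| = 1

theorem isNormalizedOn_inv_mul {n : ℕ} {Q : Cube n} {f : Pt n → ℝ} {M : ℝ} (hM : 0 < M)
    (hle : ∀ x ∈ Q.toSet, |f x| ≤ M) (hmax : ∃ x ∈ Q.toSet, |f x| = M) :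
    IsNormalizedOn Q fun x => M⁻¹ * f x := by
  refine ⟨fun x hx => ?_, hmax.imp fun x hx => ⟨hx.1, ?_⟩⟩
  · rw [abs_mul, abs_inv, abs_of_pos hM, inv_mul_le_one₀ hM]; exact hle x hx
  · rw [abs_mul, abs_inv, abs_of_pos hM, hx.2, inv_mul_cancel₀ hM.ne']

namespace polyFun

variable {n d : ℕ} {f : Pt n → ℝ}

theorem mem_iff : f ∈ polyFun n d ↔ ∃ P : MvPolynomial (Fin n) ℝ,
    P.totalDegree ≤ d ∧ (fun x => MvPolynomial.eval (fun i => x i) P) = f := by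
  simp [polyFun, MvPolynomial.mem_restrictTotalDegree, polyEval]

theorem mono {e : ℕ} (h : d ≤ e) : polyFun n d ≤ polyFun n e :=
  Submodule.map_mono fun P hP => by
    rw [MvPolynomial.mem_restrictTotalDegree] at hP ⊢; exact hP.trans h

theorem contDiff (hf : f ∈ polyFun n d) : ContDiff ℝ ⊤ f := by
  obtain ⟨P, -, rfl⟩ := Submodule.mem_map.mp hf
  exact contDiff_polyEval P

theorem comp_affine (hf : f ∈ polyFun n d) (c : Pt n) (s : ℝ) :
    (fun x => f (c + s • x)) ∈ polyFun n d := by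
  open MvPolynomial in
  obtain ⟨P, hP, rfl⟩ := mem_iff.mp hf
  refine mem_iff.mpr ⟨bind₁ (fun i => C (c i) + C s * X i) P, ?_, ?_⟩
  · refine (totalDegree_bind₁_le _ (fun i => ?_) P).trans (by rwa [mul_one])
    exact (totalDegree_add _ _).trans (max_le (by simp) ((totalDegree_mul _ _).trans (by simp)))
  · ext x
    dsimp only
    rw [eval, eval₂Hom_bind₁, eval]
    congr 2
    funext i
    simp

theorem eq_zero_of_eqOn_cube (hf : f ∈ polyFun n d) {Q : Cube n} (hQ : 0 < Q.side)
    (h : EqOn f 0 Q.toSet) : f = 0 := by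
  obtain ⟨P, -, rfl⟩ := mem_iff.mp hf
  have hP : P = 0 := by
    refine MvPolynomial.funext_set
      (fun i => Icc (Q.center i - Q.side / 2) (Q.center i + Q.side / 2))
      (fun i => Icc_infinite (by linarith)) fun x hx => ?_
    simpa using h (x := WithLp.toLp 2 x) fun i =>
      abs_sub_le_iff.mpr ⟨by linarith [(hx i trivial).2], by linarith [(hx i trivial).1]⟩
  ext x
  simp [hP]

theorem exists_bound_of_abs_le (Q₀ : Cube n) (h₀ : 0 < Q₀.side) {K : Set (Pt n)}
    (hK : IsCompact K) : ∃ A, 0 ≤ A ∧ ∀ f ∈ polyFun n d, ∀ M, 0 ≤ M →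
      (∀ x ∈ Q₀.toSet, |f x| ≤ M) →
      (∀ x ∈ K, |f x| ≤ A * M) ∧ ∀ x ∈ K, ∀ y ∈ K, |f x - f y| ≤ A * M * dist x y := by
  obtain ⟨A, hA, hV⟩ := Submodule.exists_abs_map_le_of_abs_le_on (V := polyFun n d)
    (fun f hf => (contDiff hf).continuous) Q₀.isCompact_toSet
    (fun f hf h0 => eq_zero_of_eqOn_cube hf h₀ h0)
  set b := Module.finBasis ℝ (polyFun n d)
  obtain ⟨B, hB⟩ := hK.exists_bound_of_continuousOn (f := fun x => ∑ i, |(b i : Pt n → ℝ) x|)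
    (continuous_finsetSum _ fun i _ => (contDiff (b i).2).continuous.abs).continuousOn
  have hlip : ∀ i, ∃ L : ℝ≥0, LipschitzOnWith L (b i : Pt n → ℝ) K := fun i =>
    ((contDiff (b i).2).of_le le_top).locallyLipschitz.locallyLipschitzOn
      |>.exists_lipschitzOnWith_of_compact hK
  choose L hL using hlip
  have hL0 : (0 : ℝ) ≤ ∑ i, (L i : ℝ) := by positivity
  refine ⟨A * (max B 0 + ∑ i, (L i : ℝ)), by positivity, fun f hf M hM hfM =>
    ⟨fun x hx => ?_, fun x hx y hy => ?_⟩⟩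
  · calc |f x| = |LinearMap.proj (R := ℝ) (φ := fun _ : Pt n => ℝ) x f| := rfl
      _ ≤ A * M * ∑ i, |(b i : Pt n → ℝ) x| := hV _ f hf M hM hfM
      _ ≤ A * M * (max B 0 + ∑ i, (L i : ℝ)) := by
        gcongr
        linarith [(Real.le_norm_self _).trans (hB x hx), le_max_left B 0]
      _ = _ := by ring
  · calc |f x - f y| = |(LinearMap.proj (R := ℝ) (φ := fun _ : Pt n => ℝ) x -
          LinearMap.proj (R := ℝ) (φ := fun _ : Pt n => ℝ) y : (Pt n → ℝ) →ₗ[ℝ] ℝ) f| := rfl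
      _ ≤ A * M * ∑ i, |(b i : Pt n → ℝ) x - (b i : Pt n → ℝ) y| := hV _ f hf M hM hfM
      _ ≤ A * M * ((max B 0 + ∑ i, (L i : ℝ)) * dist x y) := by
        gcongr
        calc ∑ i, |(b i : Pt n → ℝ) x - (b i : Pt n → ℝ) y| ≤ ∑ i, (L i : ℝ) * dist x y :=
              Finset.sum_le_sum fun i _ => by
                rw [← Real.dist_eq]; exact (hL i).dist_le_mul x hx y hy
          _ ≤ (max B 0 + ∑ i, (L i : ℝ)) * dist x y := by
            rw [← Finset.sum_mul]; gcongr; linarith [le_max_right B 0]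
      _ = _ := by ring

theorem exists_bound_on_affineImage (Q₀ Q₁ : Cube n) (h₀ : 0 < Q₀.side) :
    ∃ A, 0 ≤ A ∧ ∀ Q : Cube n, 0 < Q.side → ∀ f ∈ polyFun n d, ∀ M, 0 ≤ M →
      (∀ x ∈ (Q.affineImage Q₀).toSet, |f x| ≤ M) →
      (∀ x ∈ (Q.affineImage Q₁).toSet, |f x| ≤ A * M) ∧
      ∀ x ∈ (Q.affineImage Q₁).toSet, ∀ y ∈ (Q.affineImage Q₁).toSet,
        |f x - f y| ≤ A * M / Q.side * dist x y := by
  obtain ⟨A, hA, hbound⟩ := exists_bound_of_abs_le (d := d) Q₀ h₀ Q₁.isCompact_toSet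
  refine ⟨A, hA, fun Q hQ f hf M hM hfM => ?_⟩
  simp only [Cube.forall_mem_affineImage_iff hQ] at hfM ⊢
  obtain ⟨hsup, hlip⟩ := hbound _ (comp_affine hf Q.center Q.side) M hM hfM
  refine ⟨hsup, fun x hx y hy => ?_⟩
  rw [Cube.dist_affine hQ.le, ← mul_assoc, div_mul_cancel₀ _ hQ.ne']
  exact hlip x hx y hy

theorem exists_lipschitzOn_dilate_three (n d : ℕ) : ∃ Λ, 0 ≤ Λ ∧ ∀ Q : Cube n, 0 < Q.side →
    ∀ f ∈ polyFun n d, (∀ x ∈ Q.toSet, |f x| ≤ 1) →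
    ∀ x ∈ (Q.dilate 3).toSet, ∀ y ∈ (Q.dilate 3).toSet, |f x - f y| ≤ Λ / Q.side * dist x y := by
  obtain ⟨Λ, hΛ, h⟩ :=
    exists_bound_on_affineImage (d := d) (Cube.unit n) ((Cube.unit n).dilate 3) one_pos
  refine ⟨Λ, hΛ, fun Q hQ f hf hfQ => ?_⟩
  rw [← Q.affineImage_unit_dilate]
  simpa using (h Q hQ f hf 1 zero_le_one (by rwa [Q.affineImage_unit])).2

theorem exists_abs_le_of_abs_le_subcube (n d : ℕ) {N : ℕ} (hN : 0 < N) : ∃ A, 0 ≤ A ∧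
    ∀ Q : Cube n, 0 < Q.side → ∀ f ∈ polyFun n d, ∀ M, 0 ≤ M → ∀ j,
      (∀ x ∈ (Q.subcube N j).toSet, |f x| ≤ M) → ∀ x ∈ Q.toSet, |f x| ≤ A * M := by
  have hcell : ∀ j, ∃ A, 0 ≤ A ∧ ∀ Q : Cube n, 0 < Q.side → ∀ f ∈ polyFun n d, ∀ M, 0 ≤ M →
      (∀ x ∈ (Q.subcube N j).toSet, |f x| ≤ M) → ∀ x ∈ Q.toSet, |f x| ≤ A * M := fun j => by
    obtain ⟨A, hA, h⟩ := exists_bound_on_affineImage (d := d) ((Cube.unit n).subcube N j)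
      (Cube.unit n) (by simp [Cube.subcube, Cube.unit, hN])
    refine ⟨A, hA, fun Q hQ f hf M hM hfM => ?_⟩
    rw [← Q.affineImage_unit]
    exact (h Q hQ f hf M hM (by rwa [Q.affineImage_unit_subcube])).1
  choose A hA h using hcell
  refine ⟨∑ j, A j, Finset.sum_nonneg fun j _ => hA j,
    fun Q hQ f hf M hM j hfM x hx => (h j Q hQ f hf M hM hfM x hx).trans ?_⟩
  gcongr
  exact Finset.single_le_sum (fun j _ => hA j) (Finset.mem_univ j)

theorem exists_renormalize_subcube (n d : ℕ) {N : ℕ} (hN : 0 < N) : ∃ A, 0 ≤ A ∧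
    ∀ Q : Cube n, 0 < Q.side → ∀ f ∈ polyFun n d, IsNormalizedOn Q f → ∀ j,
      ∃ g ∈ polyFun n d, IsNormalizedOn (Q.subcube N j) g ∧ ∀ x, |g x| ≤ A * |f x| := by
  obtain ⟨A, hA, hcomp⟩ := exists_abs_le_of_abs_le_subcube n d hN
  refine ⟨A, hA, ?_⟩
  rintro Q hQ f hf ⟨-, x₀, hx₀, hfx₀⟩ j
  set B := Q.subcube N j
  have hB : 0 < B.side := div_pos hQ (Nat.cast_pos.mpr hN)
  obtain ⟨xm, hxm, hmax⟩ := B.isCompact_toSet.exists_isMaxOn ⟨B.center, B.center_mem_toSet hB.le⟩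
    (contDiff hf).continuous.abs.continuousOn
  have hAM : 1 ≤ A * |f xm| :=
    hfx₀ ▸ hcomp Q hQ f hf _ (abs_nonneg _) j (fun x hx => hmax hx) x₀ hx₀
  have hM : 0 < |f xm| := pos_of_mul_pos_right (one_pos.trans_le hAM) hA
  refine ⟨fun x => |f xm|⁻¹ * f x, Submodule.smul_mem _ _ hf,
    isNormalizedOn_inv_mul hM (fun x hx => hmax hx) ⟨xm, hxm, rfl⟩, fun x => ?_⟩
  rw [abs_mul, abs_inv, abs_abs]
  gcongr
  rwa [inv_le_iff_one_le_mul₀ hM]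

theorem exists_subcube_abs_ge_half (n d : ℕ) : ∃ N, 0 < N ∧ ∀ Q : Cube n, 0 < Q.side →
    ∀ f ∈ polyFun n d, IsNormalizedOn Q f → ∃ j, ∀ y ∈ (Q.subcube N j).toSet, 1 / 2 ≤ |f y| := by
  obtain ⟨Λ, hΛ, hlip⟩ := exists_lipschitzOn_dilate_three n d
  refine ⟨⌈2 * Λ * √n⌉₊ + 1, Nat.succ_pos _, fun Q hQ f hf ⟨hle, x₀, hx₀, hfx₀⟩ => ?_⟩
  set N := ⌈2 * Λ * √n⌉₊ + 1
  have hN : (0 : ℝ) < N := Nat.cast_pos.mpr (Nat.succ_pos _)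
  obtain ⟨j, hj⟩ := Q.exists_mem_subcube hQ (Nat.succ_pos _) hx₀
  refine ⟨j, fun y hy => ?_⟩
  have h3 := Q.toSet_subset_dilate hQ.le (by norm_num : (1 : ℝ) ≤ 3)
  have hdist := (Q.subcube N j).dist_le_of_mem (div_pos hQ hN).le hy hj
  have hΛN : Λ * √n ≤ N / 2 := by
    have := Nat.le_ceil (2 * Λ * √n)
    simp only [N, Nat.cast_add, Nat.cast_one]
    linarith
  have : |f x₀ - f y| ≤ 1 / 2 := calc
    |f x₀ - f y| ≤ Λ / Q.side * dist x₀ y :=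
      hlip Q hQ f hf hle x₀ (h3 hx₀) y (h3 (Q.subcube_subset hQ j hy))
    _ ≤ Λ / Q.side * (√n * (Q.side / N)) := by rw [dist_comm]; gcongr; exact hdist
    _ = Λ * √n / N := by field_simp
    _ ≤ 1 / 2 := by rw [div_le_iff₀ hN]; linarith
  linarith [abs_sub_abs_le_abs_sub (f x₀) (f y)]

theorem exists_measure_sublevel_box_le_geometric (n d : ℕ) {Cd : ℝ} (hCd : 1 ≤ Cd) :
    ∃ K q : ℝ, 1 < K ∧ 0 < q ∧ q < 1 ∧ ∀ (μ : Measure (Pt n)) [IsLocallyFiniteMeasure μ],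
      IsDoubling μ Cd → ∀ (m : ℕ) (Q : Cube n), 0 < Q.side → ∀ f ∈ polyFun n d,
        IsNormalizedOn Q f →
          μ (Q.box ∩ {x | |f x| ≤ 2⁻¹ / K ^ m}) ≤ ENNReal.ofReal (q ^ m) * μ Q.box := by
  obtain ⟨N, hN, hhalf⟩ := exists_subcube_abs_ge_half n d
  obtain ⟨A, hA, hrenorm⟩ := exists_renormalize_subcube n d hN
  set k := 4 * N
  set ε := (2 * Cd ^ k)⁻¹
  have hε : 0 < ε := by positivity
  have hε2 : ε ≤ 2⁻¹ := inv_anti₀ two_pos (le_mul_of_one_le_right two_pos.le (one_le_pow₀ hCd))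
  refine ⟨A + 2, 1 - ε, by linarith, by linarith, by linarith, fun μ _ hμ m => ?_⟩
  induction m with
  | zero =>
    intro Q _ f _ _
    simpa using measure_mono inter_subset_left
  | succ m ih =>
    intro Q hQ f hf hnorm
    have hN' : (0 : ℝ) < N := Nat.cast_pos.mpr hN
    obtain ⟨j₀, hj₀⟩ := hhalf Q hQ f hf hnorm
    have hthr : 2⁻¹ / (A + 2) ^ (m + 1) < 1 / 2 := by
      rw [one_div]; exact div_lt_self (by norm_num) (one_lt_pow₀ (by linarith) m.succ_ne_zero)
    have hS : ENNReal.ofReal ε * μ Q.box ≤ μ (Q.subcube N j₀).box := calc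
      ENNReal.ofReal ε * μ Q.box
          ≤ ENNReal.ofReal ε * (ENNReal.ofReal Cd ^ k * μ (Q.subcube N j₀).box) := by
        gcongr; exact hμ.measure_box_le_subcube hQ hN Nat.lt_two_pow_self.le j₀
      _ = ENNReal.ofReal 2⁻¹ * μ (Q.subcube N j₀).box := by
        rw [← mul_assoc, ← ENNReal.ofReal_pow (by linarith), ← ENNReal.ofReal_mul hε.le]
        congr 2
        simp only [ε]
        field_simp
      _ ≤ μ (Q.subcube N j₀).box := mul_le_of_le_one_left' (ENNReal.ofReal_le_one.mpr (by norm_num))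
    have hE₀ : Disjoint (Q.subcube N j₀).box {x | |f x| ≤ 2⁻¹ / (A + 2) ^ (m + 1)} :=
      disjoint_left.mpr fun x hx hxE => by
        linarith [hj₀ x (Cube.box_subset_toSet _ hx), hxE.out, hthr]
    have hE : ∀ j ≠ j₀, μ ((Q.subcube N j).box ∩ {x | |f x| ≤ 2⁻¹ / (A + 2) ^ (m + 1)}) ≤
        ENNReal.ofReal ((1 - ε) ^ m) * μ (Q.subcube N j).box := fun j _ => by
      obtain ⟨g, hg, hgnorm, hgf⟩ := hrenorm Q hQ f hf hnorm j
      have hsub : (Q.subcube N j).box ∩ {x | |f x| ≤ 2⁻¹ / (A + 2) ^ (m + 1)} ⊆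
          (Q.subcube N j).box ∩ {x | |g x| ≤ 2⁻¹ / (A + 2) ^ m} := fun x hx => ⟨hx.1, calc
        |g x| ≤ A * |f x| := hgf x
        _ ≤ (A + 2) * (2⁻¹ / (A + 2) ^ (m + 1)) := by gcongr; linarith; exact hx.2.out
        _ = 2⁻¹ / (A + 2) ^ m := by field_simp; ring⟩
      exact (measure_mono hsub).trans (ih _ (div_pos hQ hN') g hg hgnorm)
    calc _ ≤ _ := Cube.measure_box_inter_le_of_subcube μ hQ hN hε.le hS hE₀ hE
      _ = ENNReal.ofReal ((1 - ε) ^ (m + 1)) * μ Q.box := by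
        rw [← mul_assoc, ← ENNReal.ofReal_mul (pow_nonneg (by linarith) _), pow_succ]

theorem exists_measure_sublevel_le_rpow (n d : ℕ) {Cd : ℝ} (hCd : 1 ≤ Cd) :
    ∃ θ C : ℝ, 0 < θ ∧ 0 < C ∧ ∀ (μ : Measure (Pt n)) [IsLocallyFiniteMeasure μ],
      IsDoubling μ Cd → ∀ Q : Cube n, 0 < Q.side → ∀ f ∈ polyFun n d, IsNormalizedOn Q f →
        ∀ t, 0 < t → μ (Q.toSet ∩ {x | |f x| ≤ t}) ≤ ENNReal.ofReal (C * t ^ θ) * μ Q.toSet := by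
  obtain ⟨K, q, hK, hq₀, hq₁, hgeom⟩ := exists_measure_sublevel_box_le_geometric n d hCd
  obtain ⟨θ, C, hθ, hC, hpow⟩ :=
    exists_rpow_bound_of_geometric (c := 2⁻¹) (by norm_num) hK hq₀ hq₁
  refine ⟨θ, C * Cd, hθ, by positivity, ?_⟩
  rintro μ _ hμ Q hQ f hf ⟨-, x₀, hx₀, hfx₀⟩ t ht
  set Q₂ := Q.dilate 2
  have hQ₂ : 0 < Q₂.side := by simp only [Q₂, Cube.dilate]; positivity
  obtain ⟨xm, hxm, hmax⟩ :=
    Q₂.isCompact_toSet.exists_isMaxOn ⟨Q₂.center, Q₂.center_mem_toSet hQ₂.le⟩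
      (contDiff hf).continuous.abs.continuousOn
  have hM : 1 ≤ |f xm| := hfx₀ ▸ hmax (Q.toSet_subset_dilate hQ.le one_le_two hx₀)
  set g := fun x => |f xm|⁻¹ * f x
  have hsub : Q.toSet ∩ {x | |f x| ≤ t} ⊆ Q₂.box ∩ {x | |g x| ≤ t} := fun x hx =>
    ⟨Q.toSet_subset_box_dilate_two hQ hx.1, by
      simp only [g, mem_ofPred_eq, abs_mul, abs_inv, abs_abs]
      exact (mul_le_of_le_one_left (abs_nonneg _) (inv_le_one_of_one_le₀ hM)).trans hx.2⟩
  calc μ (Q.toSet ∩ {x | |f x| ≤ t}) ≤ μ (Q₂.box ∩ {x | |g x| ≤ t}) := measure_mono hsub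
    _ ≤ ENNReal.ofReal (C * t ^ θ) * μ Q₂.box := by
      refine hpow (fun t => μ (Q₂.box ∩ {x | |g x| ≤ t})) _
        (fun s s' hss' => measure_mono fun x hx => ⟨hx.1, hx.2.out.trans hss'⟩)
        (fun t => measure_mono inter_subset_left) (fun m => ?_) t ht
      exact hgeom μ hμ m Q₂ hQ₂ g (Submodule.smul_mem _ _ hf)
        (isNormalizedOn_inv_mul (one_pos.trans_le hM) (fun x hx => hmax hx) ⟨xm, hxm, rfl⟩)
    _ ≤ ENNReal.ofReal (C * t ^ θ) * (ENNReal.ofReal Cd * μ Q.toSet) := by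
      gcongr; exact (measure_mono Q₂.box_subset_toSet).trans (hμ Q hQ)
    _ = ENNReal.ofReal (C * Cd * t ^ θ) * μ Q.toSet := by
      rw [← mul_assoc, ← ENNReal.ofReal_mul (by positivity)]; ring_nf

theorem exists_measure_inter_thickening_le (n d : ℕ) {Cd : ℝ} (hCd : 1 ≤ Cd) :
    ∃ θ C : ℝ, 0 < θ ∧ 0 < C ∧ ∀ (μ : Measure (Pt n)) [IsLocallyFiniteMeasure μ],
      IsDoubling μ Cd → ∀ Q : Cube n, 0 < Q.side → ∀ f ∈ polyFun n d, IsNormalizedOn Q f →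
        ∀ δ, 0 < δ → δ < 1 → μ (Q.toSet ∩ Metric.thickening (δ * Q.side) {z | f z = 0}) ≤
          ENNReal.ofReal (C * δ ^ θ) * μ Q.toSet := by
  obtain ⟨Λ, hΛ, hlip⟩ := exists_lipschitzOn_dilate_three n d
  obtain ⟨θ, C, hθ, hC, hsub⟩ := exists_measure_sublevel_le_rpow n d hCd
  refine ⟨θ, C * (Λ + 1) ^ θ, hθ, by positivity, fun μ _ hμ Q hQ f hf hnorm δ hδ hδ1 => ?_⟩
  have hincl : Q.toSet ∩ Metric.thickening (δ * Q.side) {z | f z = 0} ⊆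
      Q.toSet ∩ {x | |f x| ≤ (Λ + 1) * δ} := by
    rintro y ⟨hy, hyZ⟩
    obtain ⟨z, hz, hyz⟩ := Metric.mem_thickening_iff.mp hyZ
    refine ⟨hy, ?_⟩
    have hz3 := Q.mem_dilate_three_of_dist_lt hy (hyz.trans (by nlinarith))
    calc |f y| = |f y - f z| := by rw [hz.out, sub_zero]
      _ ≤ Λ / Q.side * dist y z :=
        hlip Q hQ f hf hnorm.1 y (Q.toSet_subset_dilate hQ.le (by norm_num) hy) z hz3
      _ ≤ Λ / Q.side * (δ * Q.side) := by gcongr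
      _ ≤ (Λ + 1) * δ := by
        rw [div_mul_eq_mul_div, mul_div_assoc, mul_div_cancel_right₀ _ hQ.ne']; nlinarith
  calc _ ≤ _ := measure_mono hincl
    _ ≤ ENNReal.ofReal (C * ((Λ + 1) * δ) ^ θ) * μ Q.toSet :=
      hsub μ hμ Q hQ f hf hnorm _ (by positivity)
    _ = ENNReal.ofReal (C * (Λ + 1) ^ θ * δ ^ θ) * μ Q.toSet := by
      rw [Real.mul_rpow (by positivity) hδ.le, mul_assoc]

end polyFun

namespace Cube

variable {n : ℕ}

def boundaryPoly (Q : Cube n) (x : Pt n) : ℝ :=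
  ∏ i, (1 - 4 / Q.side ^ 2 * (x i - Q.center i) ^ 2)

theorem boundaryPoly_mem_polyFun (Q : Cube n) : Q.boundaryPoly ∈ polyFun n (2 * n) := by
  open MvPolynomial in
  refine polyFun.mem_iff.mpr
    ⟨∏ i, (1 - C (4 / Q.side ^ 2) * (X i - C (Q.center i)) ^ 2), ?_, ?_⟩
  · have hfac : ∀ i, (1 - C (4 / Q.side ^ 2) * (X i - C (Q.center i)) ^ 2 :
        MvPolynomial (Fin n) ℝ).totalDegree ≤ 2 := fun i => by
      refine (totalDegree_sub _ _).trans (max_le (by simp) ((totalDegree_mul _ _).trans ?_))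
      rw [totalDegree_C, zero_add]
      refine (totalDegree_pow _ _).trans ?_
      have : (X i - C (Q.center i) : MvPolynomial (Fin n) ℝ).totalDegree ≤ 1 :=
        (totalDegree_sub _ _).trans (max_le (by simp) (by simp))
      omega
    refine (totalDegree_finsetProd _ _).trans ((Finset.sum_le_sum fun i _ => hfac i).trans ?_)
    simp [mul_comm]
  · ext x
    simp [boundaryPoly]

theorem isNormalizedOn_boundaryPoly {Q : Cube n} (hQ : 0 < Q.side) :
    IsNormalizedOn Q Q.boundaryPoly := by
  refine ⟨fun x hx => ?_, Q.center, Q.center_mem_toSet hQ.le, by simp [boundaryPoly]⟩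
  have hfac : ∀ i, 0 ≤ 1 - 4 / Q.side ^ 2 * (x i - Q.center i) ^ 2 ∧
      1 - 4 / Q.side ^ 2 * (x i - Q.center i) ^ 2 ≤ 1 := fun i => by
    have h := sq_le_sq' (abs_le.mp (hx i)).1 (abs_le.mp (hx i)).2
    have h4 : 4 / Q.side ^ 2 * (x i - Q.center i) ^ 2 ≤ 1 := by
      rw [div_mul_eq_mul_div, div_le_one (by positivity)]; linarith
    constructor <;>
      nlinarith [sq_nonneg (x i - Q.center i), div_nonneg zero_le_four (sq_nonneg Q.side)]
  rw [boundaryPoly, abs_of_nonneg (Finset.prod_nonneg fun i _ => (hfac i).1)]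
  exact Finset.prod_le_one (fun i _ => (hfac i).1) fun i _ => (hfac i).2

theorem boundaryPoly_eq_zero_of_mem_frontier {Q : Cube n} (hQ : 0 < Q.side) {z : Pt n}
    (hz : z ∈ frontier Q.toSet) : Q.boundaryPoly z = 0 := by
  obtain ⟨i, hi⟩ := Q.frontier_toSet_subset hz
  refine Finset.prod_eq_zero (Finset.mem_univ i) ?_
  rw [← sq_abs (z i - Q.center i), hi]
  field_simp
  ring

end Cube

theorem halo_power_decay_general (n κ : ℕ) (Cd : ℝ) :
    ∃ θ C : ℝ, 0 < θ ∧ 0 < C ∧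
      ∀ μ : Measure (Pt n), IsLocallyFiniteMeasure μ → IsDoubling μ Cd →
      ∀ Q : Cube n, 0 < Q.side →
        (∀ P : MvPolynomial (Fin n) ℝ, P.totalDegree < κ →
          (∀ x ∈ Q.toSet, |MvPolynomial.eval (fun i => x i) P| ≤ 1) →
          (∃ x ∈ Q.toSet, |MvPolynomial.eval (fun i => x i) P| = 1) →
          ∀ δ : ℝ, 0 < δ → δ < 1 →
            μ (Q.toSet ∩ {y : Pt n | ∃ z : Pt n,
                MvPolynomial.eval (fun i => z i) P = 0 ∧ dist y z < δ * Q.side}) ≤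
              ENNReal.ofReal (C * δ ^ θ) * μ Q.toSet) ∧
        (∀ δ : ℝ, 0 < δ → δ < 1 →
          μ (Q.toSet ∩ {y : Pt n | ∃ z ∈ frontier Q.toSet, dist y z < δ * Q.side}) ≤
            ENNReal.ofReal (C * δ ^ θ) * μ Q.toSet) := by
  obtain ⟨θ, C, hθ, hC, hhalo⟩ :=
    polyFun.exists_measure_inter_thickening_le n (κ + 2 * n) (le_max_right Cd 1)
  refine ⟨θ, C, hθ, hC, fun μ _ hμ Q hQ => ⟨?_, fun δ hδ hδ1 => ?_⟩⟩
  · rintro P hP hle ⟨x, hx, hPx⟩ δ hδ hδ1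
    have hf : (fun x : Pt n => MvPolynomial.eval (fun i => x i) P) ∈ polyFun n (κ + 2 * n) :=
      polyFun.mem_iff.mpr ⟨P, by omega, rfl⟩
    convert hhalo μ (hμ.mono (le_max_left Cd 1)) Q hQ _ hf ⟨hle, x, hx, hPx⟩ δ hδ hδ1 using 3
    ext y
    simp [Metric.mem_thickening_iff]
  · have hincl : Q.toSet ∩ {y | ∃ z ∈ frontier Q.toSet, dist y z < δ * Q.side} ⊆
        Q.toSet ∩ Metric.thickening (δ * Q.side) {z | Q.boundaryPoly z = 0} :=
      fun y ⟨hy, z, hz, hyz⟩ => ⟨hy, Metric.mem_thickening_iff.mpr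
        ⟨z, Cube.boundaryPoly_eq_zero_of_mem_frontier hQ hz, hyz⟩⟩
    exact (measure_mono hincl).trans <| hhalo μ (hμ.mono (le_max_left Cd 1)) Q hQ _
      (polyFun.mono (by omega) Q.boundaryPoly_mem_polyFun) (Cube.isNormalizedOn_boundaryPoly hQ)
      δ hδ hδ1

/-- For a doubling measure `μ` on `ℝⁿ`, the `δ`-halo (at the scale of `Q`)
of the zero set of a `Q`-normalized polynomial of degree `< κ` has power decay:
`|Q ∩ Z_δ|_μ ≤ C_{n,κ} δ^θ |Q|_μ` for constants `θ, C_{n,κ} > 0` depending only on `n`, `κ`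
and the doubling constant of `μ` (not on the polynomial).  In particular the same power
decay holds for the halo of the boundary `∂Q`. -/
theorem halo_power_decay (n κ : ℕ) (hκ : 1 ≤ κ) (Cd : ℝ) :
    ∃ θ C : ℝ, 0 < θ ∧ 0 < C ∧
      ∀ μ : Measure (Pt n), IsLocallyFiniteMeasure μ → IsDoubling μ Cd →
      ∀ Q : Cube n, 0 < Q.side →
        (∀ P : MvPolynomial (Fin n) ℝ, P.totalDegree < κ →
          (∀ x ∈ Q.toSet, |MvPolynomial.eval (fun i => x i) P| ≤ 1) →
          (∃ x ∈ Q.toSet, |MvPolynomial.eval (fun i => x i) P| = 1) →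
          ∀ δ : ℝ, 0 < δ → δ < 1 →
            μ (Q.toSet ∩ {y : Pt n | ∃ z : Pt n,
                MvPolynomial.eval (fun i => z i) P = 0 ∧ dist y z < δ * Q.side}) ≤
              ENNReal.ofReal (C * δ ^ θ) * μ Q.toSet) ∧
        (∀ δ : ℝ, 0 < δ → δ < 1 →
          μ (Q.toSet ∩ {y : Pt n | ∃ z ∈ frontier Q.toSet, dist y z < δ * Q.side}) ≤
            ENNReal.ofReal (C * δ ^ θ) * μ Q.toSet) :=
  halo_power_decay_general n κ Cd
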